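/- Let R = C[w_0,...,w_m] with the Z^{n+1}-grading deg(w_i) = −ã_i where ã_0=(1,0), ã_i=(1,a_i), for a_1,...,a_m the rays of a complete smooth weak Fano fan, and S = R/I the toric ring, which is normal Cohen–Macaulay. Then the canonical module of S satisfies ω_S ≅ S((1,0)) as Z^{n+1}-graded S-modules; i.e., ω_S is the ideal of S generated by monomials whose exponents are interior points of the semigroup, and these interior points are exactly (1,0) + N·Atilde. -/

import Mathlib

/-- The extended vectors `ã_0 = (1,0)`, `ã_i = (1, a_i)` in `ℤ^{n+1}`. -/
def atilde {n m : ℕ} (a : Fin m → Fin n → ℤ) : Option (Fin m) → Fin (n + 1) → ℤ :=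
  fun o => Fin.cons 1 (fun j => Option.elim o 0 (fun i => a i j))

/-!
Since the rays positively span `ℝⁿ`, the vector `ã_0 = (1,0)` is a strictly positive combination
of the `ã_o`, and these span `ℝ^{n+1}`. The linear map `c ↦ ∑ c_o ã_o` is then open, so it maps
the open positive orthant into the interior of the cone; in particular every point of
`(1,0) + ℕ·Ã` is interior.

Conversely, if a lattice point `x` is interior, then `x - δ (1,0)` lies in the cone for some
`δ > 0`, i.e. `x = (x₀, ∑ cᵢ aᵢ)` with `cᵢ ≥ 0` and `∑ cᵢ < x₀`. Convexity of
`⋃_σ conv(0, a_σ)` rewrites `∑ cᵢ aᵢ` as a combination supported on a single cone `σ` with no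
larger total weight, and smoothness (`a_σ` is a `ℤ`-basis of `ℤⁿ`) forces its coefficients to be
natural numbers. Hence `x - (1,0) ∈ ℕ·Ã`. The statements about `ω` and `S` then only compare
supports of monomials.
-/

open Finset Set
open scoped Pointwise

def conicalHull {ι E : Type*} [Fintype ι] [AddCommMonoid E] [Module ℝ E] (v : ι → E) : Set E :=
  {y | ∃ c : ι → ℝ, (∀ i, 0 ≤ c i) ∧ y = ∑ i, c i • v i}

section Cones

variable {ι E : Type*} [Fintype ι]

lemma exists_pos_sub_smul_mem_of_mem_interior [AddCommGroup E] [TopologicalSpace E] [Module ℝ E]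
    [IsTopologicalAddGroup E] [ContinuousSMul ℝ E] {s : Set E} {y : E} (hy : y ∈ interior s)
    (u : E) : ∃ δ : ℝ, 0 < δ ∧ y - δ • u ∈ s := by
  have hcont : Continuous fun t : ℝ => y - t • u := by fun_prop
  have hnhds : ∀ᶠ t in nhds (0 : ℝ), y - t • u ∈ s :=
    hcont.continuousAt.preimage_mem_nhds (by simpa using mem_interior_iff_mem_nhds.mp hy)
  exact hnhds.exists_gt

lemma sum_smul_mem_interior_conicalHull [NormedAddCommGroup E] [NormedSpace ℝ E]
    [FiniteDimensional ℝ E] {v : ι → E} (hv : Submodule.span ℝ (range v) = ⊤) {c : ι → ℝ}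
    (hc : ∀ i, 0 < c i) : ∑ i, c i • v i ∈ interior (conicalHull v) := by
  set T := Fintype.linearCombination ℝ v
  have hT : Function.Surjective T := by
    rw [← LinearMap.range_eq_top, Fintype.range_linearCombination, hv]
  have hpos : IsOpen {c : ι → ℝ | ∀ i, 0 < c i} := by
    simpa only [ofPred_forall] using isOpen_iInter_of_finite fun i =>
      isOpen_lt continuous_const (continuous_apply i)
  refine interior_maximal ?_ (T.isOpenMap_of_finiteDimensional hT _ hpos)
    ⟨c, hc, Fintype.linearCombination_apply ℝ v c⟩
  rintro _ ⟨c', hc', rfl⟩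
  exact ⟨c', fun i => (hc' i).le, Fintype.linearCombination_apply ℝ v c'⟩

variable [AddCommGroup E] [Module ℝ E]

lemma exists_eq_sum_smul_of_mem_convexHull_insert_zero {v : ι → E} {σ : Finset ι} {p : E}
    (hp : p ∈ convexHull ℝ (insert 0 (v '' ↑σ))) :
    ∃ d : ι → ℝ, (∀ i, 0 ≤ d i) ∧ (∀ i ∉ σ, d i = 0) ∧ ∑ i, d i ≤ 1 ∧ p = ∑ i, d i • v i := by
  classical
  set D : Set (ι → ℝ) := {d | (∀ i, 0 ≤ d i) ∧ (∀ i ∉ σ, d i = 0) ∧ ∑ i, d i ≤ 1}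
  have hD : Convex ℝ D := by
    rintro d ⟨hd0, hdσ, hd1⟩ d' ⟨hd0', hdσ', hd1'⟩ s t hs ht hst
    refine ⟨fun i => ?_, fun i hi => by simp [hdσ i hi, hdσ' i hi], ?_⟩
    · exact add_nonneg (mul_nonneg hs (hd0 i)) (mul_nonneg ht (hd0' i))
    · simp only [Pi.add_apply, Pi.smul_apply, smul_eq_mul, sum_add_distrib, ← mul_sum]
      nlinarith
  have hsub : insert 0 (v '' ↑σ) ⊆ Fintype.linearCombination ℝ v '' D := by
    rintro _ (rfl | ⟨i, hi, rfl⟩)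
    · exact ⟨0, ⟨fun _ => le_rfl, fun _ _ => rfl, by simp⟩, map_zero _⟩
    · refine ⟨Pi.single i 1, ⟨fun j => ?_, fun j hj => ?_, by simp⟩, by simp⟩
      · by_cases h : j = i <;> simp [h]
      · simp [show j ≠ i by rintro rfl; exact hj hi]
  obtain ⟨d, ⟨hd0, hdσ, hd1⟩, rfl⟩ := convexHull_min hsub (hD.linear_image _) hp
  exact ⟨d, hd0, hdσ, hd1, Fintype.linearCombination_apply ℝ v d⟩

lemma exists_sum_smul_eq_of_convex_fan {v : ι → E} {𝒮 : Finset (Finset ι)} (h𝒮 : 𝒮.Nonempty)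
    (hray : ∀ i, ∃ σ ∈ 𝒮, i ∈ σ)
    (hconv : Convex ℝ (⋃ σ ∈ 𝒮, convexHull ℝ (insert 0 (v '' ↑σ))))
    {c : ι → ℝ} (hc : ∀ i, 0 ≤ c i) :
    ∃ σ ∈ 𝒮, ∃ d : ι → ℝ, (∀ i, 0 ≤ d i) ∧ (∀ i ∉ σ, d i = 0) ∧ ∑ i, d i ≤ ∑ i, c i ∧
      ∑ i, c i • v i = ∑ i, d i • v i := by
  rcases (sum_nonneg fun i _ => hc i).eq_or_lt with hs | hs
  · obtain ⟨σ, hσ⟩ := h𝒮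
    have hc0 : ∀ i, c i = 0 := fun i => (sum_eq_zero_iff_of_nonneg fun i _ => hc i).1 hs.symm i
      (mem_univ i)
    exact ⟨σ, hσ, 0, fun _ => le_rfl, fun _ _ => rfl, by simp [hc0], by simp [hc0]⟩
  set s := ∑ i, c i
  -- normalising `c` puts the combination in the convex hull of the rays, hence in one cone
  have hp : ∑ i, (s⁻¹ * c i) • v i ∈ ⋃ σ ∈ 𝒮, convexHull ℝ (insert 0 (v '' ↑σ)) := by
    refine hconv.sum_mem (fun i _ => mul_nonneg (inv_nonneg.2 hs.le) (hc i))
      (by rw [← mul_sum, inv_mul_cancel₀ hs.ne']) fun i _ => ?_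
    obtain ⟨σ, hσ, hi⟩ := hray i
    exact mem_biUnion hσ (subset_convexHull ℝ _ (mem_insert_of_mem _ ⟨i, hi, rfl⟩))
  obtain ⟨σ, hσ, hpσ⟩ := mem_iUnion₂.1 hp
  obtain ⟨d, hd0, hdσ, hd1, hpd⟩ := exists_eq_sum_smul_of_mem_convexHull_insert_zero hpσ
  refine ⟨σ, hσ, s • d, fun i => mul_nonneg hs.le (hd0 i), fun i hi => by simp [hdσ i hi], ?_, ?_⟩
  · simpa [← mul_sum] using mul_le_mul_of_nonneg_left hd1 hs.le
  · calc ∑ i, c i • v i = s • ∑ i, (s⁻¹ * c i) • v i := by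
          simp [smul_sum, smul_smul, ← mul_assoc, mul_inv_cancel₀ hs.ne']
      _ = ∑ i, (s • d) i • v i := by simp [hpd, smul_sum, smul_smul]

end Cones

lemma Module.Basis.intCast_repr_eq {n : ℕ} {κ : Type*} [Fintype κ]
    (B : Module.Basis κ ℤ (Fin n → ℤ)) {v : Fin n → ℤ} {d : κ → ℝ}
    (hv : (fun k => (v k : ℝ)) = ∑ j, d j • fun k => (B j k : ℝ)) (i : κ) :
    (B.repr v i : ℝ) = d i := by
  classical
  -- the `i`-th coordinate functional of `B`, extended to real vectors
  let φ : (Fin n → ℝ) →ₗ[ℝ] ℝ := ∑ k, (B.repr (Pi.single k 1) i : ℝ) • LinearMap.proj k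
  have hφ : ∀ u : Fin n → ℤ, φ (fun k => (u k : ℝ)) = B.repr u i := by
    intro u
    conv_rhs => rw [← Finset.univ_sum_single u]
    simp only [φ, map_sum, LinearMap.coe_sum, Finset.sum_apply, LinearMap.smul_apply,
      LinearMap.proj_apply, smul_eq_mul, Finsupp.coe_finsetSum, Int.cast_sum]
    refine Finset.sum_congr rfl fun k _ => ?_
    rw [show (Pi.single k (u k) : Fin n → ℤ) = u k • Pi.single k 1 by
      rw [← Pi.single_smul', smul_eq_mul, mul_one], map_zsmul,
      Finsupp.smul_apply, smul_eq_mul, Int.cast_mul, mul_comm]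
  calc (B.repr v i : ℝ) = φ (fun k => (v k : ℝ)) := (hφ v).symm
    _ = d i := by simp [hv, map_sum, hφ, Finsupp.single_apply]

lemma exists_natCast_eq_of_linearIndependent {n : ℕ} {ι : Type*} [Fintype ι]
    {b : ι → Fin n → ℤ} {σ : Finset ι} (hli : LinearIndependent ℤ (fun i : σ => b i))
    (hsp : Submodule.span ℤ (b '' ↑σ) = ⊤) {v : Fin n → ℤ} {d : ι → ℝ} (hd0 : ∀ i, 0 ≤ d i)
    (hdσ : ∀ i ∉ σ, d i = 0) (hv : (fun k => (v k : ℝ)) = ∑ i, d i • fun k => (b i k : ℝ)) :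
    ∃ N : ι → ℕ, ∀ i, (N i : ℝ) = d i := by
  classical
  let B := Module.Basis.mk hli <| by
    rw [← hsp]; exact Submodule.span_mono (by rintro _ ⟨i, hi, rfl⟩; exact ⟨⟨i, hi⟩, rfl⟩)
  have hrepr (i : σ) : (B.repr v i : ℝ) = d i := by
    refine B.intCast_repr_eq (d := fun j : σ => d j) ?_ i
    rw [hv, ← sum_subset (subset_univ σ) fun i _ hi => by simp [hdσ i hi], ← sum_coe_sort σ]
    simp [B]
  refine ⟨fun i => if h : i ∈ σ then (B.repr v ⟨i, h⟩).toNat else 0, fun i => ?_⟩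
  by_cases h : i ∈ σ
  · have hnonneg : 0 ≤ B.repr v ⟨i, h⟩ := by exact_mod_cast (hrepr ⟨i, h⟩).symm ▸ hd0 i
    simp only [dif_pos h]
    rw [← hrepr ⟨i, h⟩, ← Int.cast_natCast, Int.toNat_of_nonneg hnonneg]
  · simp [h, hdσ i h]

namespace AddMonoidAlgebra

variable {k G : Type*} [Semiring k]

lemma supported_vadd_le [AddMonoid G] (P : AddSubmonoid G) {e : G} (he : e ∈ P) :
    supported k k (e +ᵥ (P : Set G)) ≤ supported k k P :=
  supported_mono (by rintro _ ⟨x, hx, rfl⟩; exact P.add_mem he hx)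

lemma mul_mem_supported_vadd [AddCommMonoid G] (P : AddSubmonoid G) (e : G) {p q : k[G]}
    (hp : p ∈ supported k k P) (hq : q ∈ supported k k (e +ᵥ (P : Set G))) :
    p * q ∈ supported k k (e +ᵥ (P : Set G)) := by
  classical
  rw [mem_supported] at *
  refine (Finset.coe_subset.2 (support_coeff_mul_subset p q)).trans ?_
  rw [Finset.coe_add]
  rintro _ ⟨x, hx, y, hy, rfl⟩
  obtain ⟨z, hz, rfl⟩ := hq hy
  exact ⟨x + z, P.add_mem (hp hx) hz, by simp only [vadd_eq_add]; abel⟩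

lemma image_single_mul_supported [AddGroup G] (s : Set G) (e : G) :
    (single e (1 : k) * ·) '' supported k k s = supported k k (e +ᵥ s) := by
  classical
  refine subset_antisymm ?_ fun q hq => ⟨single (-e) 1 * q, ?_, ?_⟩
  · rintro _ ⟨p, hp, rfl⟩
    refine (Finset.coe_subset.2 (support_coeff_single_mul_subset p 1 e)).trans ?_
    rw [Finset.coe_image]
    exact image_mono hp
  · rw [SetLike.mem_coe, mem_supported] at hq ⊢
    refine (Finset.coe_subset.2 (support_coeff_single_mul_subset q 1 (-e))).trans ?_
    rw [Finset.coe_image]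
    rintro _ ⟨x, hx, rfl⟩
    simpa [mem_vadd_set_iff_neg_vadd_mem] using hq hx
  · show single e 1 * (single (-e) 1 * q) = q
    rw [← mul_assoc, single_mul_single, add_neg_cancel, mul_one, ← one_def, one_mul]

end AddMonoidAlgebra

section Toric

variable {n m : ℕ} (a : Fin m → Fin n → ℤ)

def atildeReal (o : Option (Fin m)) : Fin (n + 1) → ℝ := fun k => (atilde a o k : ℝ)

lemma sum_smul_atilde (c : Option (Fin m) → ℤ) :
    ∑ o, c o • atilde a o = Fin.cons (∑ o, c o) (∑ i, c (some i) • a i) := by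
  ext k
  refine Fin.cases ?_ (fun j => ?_) k <;> simp [atilde, Finset.sum_apply, Fintype.sum_option]

lemma sum_smul_atildeReal (c : Option (Fin m) → ℝ) :
    ∑ o, c o • atildeReal a o =
      Fin.cons (∑ o, c o) (∑ i, c (some i) • fun k => (a i k : ℝ)) := by
  ext k
  refine Fin.cases ?_ (fun j => ?_) k <;>
    simp [atilde, atildeReal, Finset.sum_apply, Fintype.sum_option]

lemma atilde_none : atilde a none = Fin.cons 1 0 := by
  ext k
  refine Fin.cases ?_ (fun j => ?_) k <;> simp [atilde]

lemma atildeReal_none : atildeReal a none = Fin.cons 1 0 := by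
  ext k
  refine Fin.cases ?_ (fun j => ?_) k <;> simp [atilde, atildeReal]

lemma exists_of_mem_conicalHull_atildeReal {y : Fin (n + 1) → ℝ}
    (hy : y ∈ conicalHull (atildeReal a)) :
    ∃ c : Fin m → ℝ, (∀ i, 0 ≤ c i) ∧ ∑ i, c i ≤ y 0 ∧
      Fin.tail y = ∑ i, c i • fun k => (a i k : ℝ) := by
  obtain ⟨c, hc0, rfl⟩ := hy
  refine ⟨fun i => c (some i), fun i => hc0 _, ?_, ?_⟩ <;> rw [sum_smul_atildeReal]
  · simpa [Fintype.sum_option] using hc0 none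
  · rfl

lemma mem_span_atilde_of {y : Fin (n + 1) → ℤ} (N : Fin m → ℕ) (h0 : ∑ i, (N i : ℤ) ≤ y 0)
    (htail : Fin.tail y = ∑ i, (N i : ℤ) • a i) :
    y ∈ Submodule.span ℕ (range (atilde a)) := by
  rw [Submodule.mem_span_range_iff_exists_fun]
  refine ⟨fun o => o.elim (y 0 - ∑ i, (N i : ℤ)).toNat N, ?_⟩
  simp_rw [← Nat.cast_smul_eq_nsmul ℤ]
  rw [sum_smul_atilde]
  conv_rhs => rw [← Fin.cons_self_tail y, htail]
  simp [Fintype.sum_option, Int.toNat_of_nonneg (sub_nonneg.2 h0)]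

variable {a}

lemma span_atildeReal_eq_top (hpos : conicalHull (fun i k => (a i k : ℝ)) = Set.univ) :
    Submodule.span ℝ (range (atildeReal a)) = ⊤ := by
  refine Submodule.eq_top_iff'.2 fun y => (Submodule.mem_span_range_iff_exists_fun ℝ).2 ?_
  obtain ⟨c, -, hc⟩ : Fin.tail y ∈ conicalHull (fun i k => (a i k : ℝ)) := hpos ▸ Set.mem_univ _
  refine ⟨fun o => o.elim (y 0 - ∑ i, c i) c, ?_⟩
  rw [sum_smul_atildeReal]
  conv_rhs => rw [← Fin.cons_self_tail y, hc]
  simp [Fintype.sum_option]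

lemma exists_pos_sum_smul_atildeReal_eq (hpos : conicalHull (fun i k => (a i k : ℝ)) = Set.univ) :
    ∃ w : Option (Fin m) → ℝ, (∀ o, 0 < w o) ∧ ∑ o, w o • atildeReal a o = atildeReal a none := by
  obtain ⟨c, hc0, hc⟩ : -∑ i, (fun k => (a i k : ℝ)) ∈ conicalHull (fun i k => (a i k : ℝ)) :=
    hpos ▸ Set.mem_univ _
  -- `∑ i, (1 + c i) • a i = 0`, so adding the weight of `ã_0` gives a positive relation
  set T := 1 + ∑ i, (1 + c i)
  have hT : 0 < T := by
    have : 0 ≤ ∑ i, (1 + c i) := sum_nonneg fun i _ => by linarith [hc0 i]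
    linarith
  refine ⟨fun o => T⁻¹ * o.elim 1 (fun i => 1 + c i), fun o => ?_, ?_⟩
  · cases o with
    | none => simpa using hT
    | some i => exact mul_pos (inv_pos.2 hT) (by simp only [Option.elim_some]; linarith [hc0 i])
  rw [sum_smul_atildeReal, atildeReal_none]
  congr 1
  · simp only [Fintype.sum_option, Option.elim_none, Option.elim_some, ← mul_sum]
    exact inv_mul_cancel₀ hT.ne'
  · simp_rw [Option.elim_some, mul_smul, add_smul, one_smul, ← smul_sum, sum_add_distrib, ← hc,
      add_neg_cancel, smul_zero]

lemma mem_interior_conicalHull_of_sub_mem_span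
    (hpos : conicalHull (fun i k => (a i k : ℝ)) = Set.univ) {x : Fin (n + 1) → ℤ}
    (hx : x - Fin.cons 1 0 ∈ Submodule.span ℕ (range (atilde a))) :
    (fun k => (x k : ℝ)) ∈ interior (conicalHull (atildeReal a)) := by
  obtain ⟨w, hw, hwe⟩ := exists_pos_sum_smul_atildeReal_eq hpos
  obtain ⟨N, hN⟩ := (Submodule.mem_span_range_iff_exists_fun ℕ).1 hx
  have hxN : (fun k => (x k : ℝ)) = ∑ o, (w o + N o) • atildeReal a o := by
    rw [← sub_add_cancel x (Fin.cons 1 0), ← hN, ← atilde_none]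
    simp_rw [add_smul, sum_add_distrib, hwe]
    funext k
    simp only [nsmul_eq_mul, Fintype.sum_option, Pi.add_apply, Pi.mul_apply, Pi.natCast_apply,
      Finset.sum_apply, Int.cast_add, Int.cast_mul, Int.cast_natCast, Int.cast_sum, atildeReal,
      Pi.smul_apply, smul_eq_mul]
    ring
  rw [hxN]
  exact sum_smul_mem_interior_conicalHull (span_atildeReal_eq_top hpos) fun o => by
    positivity [hw o]

lemma sub_mem_span_of_mem_interior_conicalHull {𝒮 : Finset (Finset (Fin m))} (h𝒮 : 𝒮.Nonempty)
    (hray : ∀ i : Fin m, ∃ σ ∈ 𝒮, i ∈ σ)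
    (hsmooth : ∀ σ ∈ 𝒮,
      LinearIndependent ℤ (fun i : {i // i ∈ σ} => a i.1) ∧ Submodule.span ℤ (a '' ↑σ) = ⊤)
    (hconv : Convex ℝ (⋃ σ ∈ 𝒮,
      convexHull ℝ (insert (0 : Fin n → ℝ) ((fun i => fun k => ((a i k : ℝ))) '' ↑σ))))
    {x : Fin (n + 1) → ℤ} (hx : (fun k => (x k : ℝ)) ∈ interior (conicalHull (atildeReal a))) :
    x - Fin.cons 1 0 ∈ Submodule.span ℕ (range (atilde a)) := by
  obtain ⟨δ, hδ, hxδ⟩ := exists_pos_sub_smul_mem_of_mem_interior hx (atildeReal a none)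
  obtain ⟨c, hc0, hcx, hctail⟩ := exists_of_mem_conicalHull_atildeReal a hxδ
  obtain ⟨σ, hσ, d, hd0, hdσ, hdc, hcd⟩ := exists_sum_smul_eq_of_convex_fan h𝒮 hray hconv hc0
  have htail : (fun k => (Fin.tail x k : ℝ)) = ∑ i, d i • fun k => (a i k : ℝ) := by
    rw [← hcd, ← hctail]
    funext k
    simp [Fin.tail, atildeReal, atilde]
  obtain ⟨N, hN⟩ := exists_natCast_eq_of_linearIndependent (hsmooth σ hσ).1 (hsmooth σ hσ).2 hd0
    hdσ htail
  refine mem_span_atilde_of a N ?_ ?_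
  · have hlt : ((∑ i, (N i : ℤ) : ℤ) : ℝ) < x 0 := by
      simp only [Pi.sub_apply, Pi.smul_apply, atildeReal, atilde, Option.elim_none, Fin.cons_zero,
        Int.cast_one, smul_eq_mul, mul_one, Int.cast_sum, Int.cast_natCast, hN] at hcx ⊢
      linarith
    have hlt' : ∑ i, (N i : ℤ) < x 0 := by exact_mod_cast hlt
    simp only [Pi.sub_apply, Fin.cons_zero]
    omega
  · funext j
    have := congrFun htail j
    simp only [← hN, Finset.sum_apply, Pi.smul_apply, smul_eq_mul] at this
    simp only [Fin.tail, Pi.sub_apply, Fin.cons_succ, Pi.zero_apply, sub_zero, zsmul_eq_mul,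
      Int.cast_natCast, Finset.sum_apply, Pi.mul_apply, Pi.natCast_apply]
    exact_mod_cast this

lemma setOf_mem_interior_conicalHull_eq_vadd {𝒮 : Finset (Finset (Fin m))} (h𝒮 : 𝒮.Nonempty)
    (hray : ∀ i : Fin m, ∃ σ ∈ 𝒮, i ∈ σ)
    (hsmooth : ∀ σ ∈ 𝒮,
      LinearIndependent ℤ (fun i : {i // i ∈ σ} => a i.1) ∧ Submodule.span ℤ (a '' ↑σ) = ⊤)
    (hconv : Convex ℝ (⋃ σ ∈ 𝒮,
      convexHull ℝ (insert (0 : Fin n → ℝ) ((fun i => fun k => ((a i k : ℝ))) '' ↑σ))))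
    (hpos : conicalHull (fun i k => (a i k : ℝ)) = Set.univ) :
    {x : Fin (n + 1) → ℤ | (fun k => (x k : ℝ)) ∈ interior (conicalHull (atildeReal a))} =
      (Fin.cons 1 0 : Fin (n + 1) → ℤ) +ᵥ (Submodule.span ℕ (range (atilde a)) : Set _) := by
  ext x
  rw [mem_vadd_set_iff_neg_vadd_mem, vadd_eq_add, neg_add_eq_sub]
  exact ⟨sub_mem_span_of_mem_interior_conicalHull h𝒮 hray hsmooth hconv,
    mem_interior_conicalHull_of_sub_mem_span hpos⟩

lemma span_single_sum_smul_atilde (k : Type*) [Semiring k] :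
    Submodule.span k {p | ∃ c : Option (Fin m) → ℕ,
        p = AddMonoidAlgebra.single (∑ o, (c o : ℤ) • atilde a o) (1 : k)} =
      AddMonoidAlgebra.supported k k (Submodule.span ℕ (range (atilde a)) : Set _) := by
  rw [AddMonoidAlgebra.supported_eq_span_single]
  congr 1
  ext p
  simp [Submodule.mem_span_range_iff_exists_fun, eq_comm]

end Toric

theorem stmt18_general (n m : ℕ) (a : Fin m → Fin n → ℤ)
    (𝒮 : Finset (Finset (Fin m)))
    (hray : ∀ i : Fin m, ∃ σ ∈ 𝒮, i ∈ σ)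
    (hcomplete : ∀ x : Fin n → ℝ, ∃ σ ∈ 𝒮, ∃ c : Fin m → ℝ,
      (∀ i, 0 ≤ c i) ∧ (∀ i, i ∉ σ → c i = 0) ∧
        x = ∑ i, c i • (fun k => ((a i k : ℝ))))
    (hsmooth : ∀ σ ∈ 𝒮,
      LinearIndependent ℤ (fun i : {i // i ∈ σ} => a i.1) ∧
        Submodule.span ℤ (a '' ↑σ) = ⊤)
    (hconv : Convex ℝ (⋃ σ ∈ 𝒮,
      convexHull ℝ (insert (0 : Fin n → ℝ) ((fun i => fun k => ((a i k : ℝ))) '' ↑σ))))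
    (Sring ω : Submodule ℂ (AddMonoidAlgebra ℂ (Fin (n + 1) → ℤ)))
    (hSring : Sring = Submodule.span ℂ
      {p | ∃ c : Option (Fin m) → ℕ,
        p = AddMonoidAlgebra.single (∑ o, (c o : ℤ) • atilde a o) (1 : ℂ)})
    (hω : ω = Submodule.span ℂ
      {p | ∃ x : Fin (n + 1) → ℤ,
        ((fun k => ((x k : ℝ))) ∈ interior
          {y : Fin (n + 1) → ℝ | ∃ c : Option (Fin m) → ℝ, (∀ o, 0 ≤ c o) ∧
            y = ∑ o, c o • (fun k => ((atilde a o k : ℝ)))}) ∧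
        p = AddMonoidAlgebra.single x (1 : ℂ)}) :
    ω ≤ Sring ∧
    (∀ p ∈ Sring, ∀ q ∈ ω, p * q ∈ ω) ∧
    (ω : Set (AddMonoidAlgebra ℂ (Fin (n + 1) → ℤ)))
      = (fun s => AddMonoidAlgebra.single (Fin.cons 1 0 : Fin (n + 1) → ℤ) (1 : ℂ) * s) ''
          (Sring : Set (AddMonoidAlgebra ℂ (Fin (n + 1) → ℤ))) := by
  have hpos : conicalHull (fun i k => (a i k : ℝ)) = Set.univ := by
    refine Set.eq_univ_of_forall fun x => ?_
    obtain ⟨-, -, c, hc0, -, hx⟩ := hcomplete x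
    exact ⟨c, hc0, hx⟩
  have h𝒮 : 𝒮.Nonempty := by
    obtain ⟨σ, hσ, -⟩ := hcomplete 0
    exact ⟨σ, hσ⟩
  set P := Submodule.span ℕ (range (atilde a))
  have he : Fin.cons 1 0 ∈ P := atilde_none a ▸ Submodule.subset_span (mem_range_self none)
  have hC : {y : Fin (n + 1) → ℝ | ∃ c : Option (Fin m) → ℝ, (∀ o, 0 ≤ c o) ∧
      y = ∑ o, c o • (fun k => ((atilde a o k : ℝ)))} = conicalHull (atildeReal a) := rfl
  have hω' : ω = AddMonoidAlgebra.supported ℂ ℂ ((Fin.cons 1 0 : Fin (n + 1) → ℤ) +ᵥ (P : Set _)) := by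
    rw [hω, hC, ← setOf_mem_interior_conicalHull_eq_vadd h𝒮 hray hsmooth hconv hpos,
      AddMonoidAlgebra.supported_eq_span_single]
    congr 1
    ext p
    simp [eq_comm]
  rw [hSring, span_single_sum_smul_atilde, hω']
  exact ⟨AddMonoidAlgebra.supported_vadd_le P.toAddSubmonoid he,
    fun p hp q hq => AddMonoidAlgebra.mul_mem_supported_vadd P.toAddSubmonoid _ hp hq,
    (AddMonoidAlgebra.image_single_mul_supported _ _).symm⟩

/-- For a complete smooth weak Fano fan, the canonical module of the (normal
Cohen–Macaulay) toric ring `S = ℂ[ℕ·Ã]` satisfies `ω_S ≅ S((1,0))`: inside the Laurent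
algebra `ℂ[ℤ^{n+1}]`, the span `ω` of the monomials with exponent an interior point of
the cone `C(Ã)` is an ideal of the semigroup algebra `S` (the span of the monomials with
exponent in the semigroup `ℕ·Ã`), and `ω` equals the principal shift of `S` by the
monomial with exponent `(1,0)` — i.e. the interior points are exactly `(1,0) + ℕ·Ã`. -/
theorem stmt18 (n m : ℕ) (a : Fin m → Fin n → ℤ)
    (𝒮 : Finset (Finset (Fin m)))
    (hcard : ∀ σ ∈ 𝒮, σ.card = n)
    (hray : ∀ i : Fin m, ∃ σ ∈ 𝒮, i ∈ σ)
    (hcomplete : ∀ x : Fin n → ℝ, ∃ σ ∈ 𝒮, ∃ c : Fin m → ℝ,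
      (∀ i, 0 ≤ c i) ∧ (∀ i, i ∉ σ → c i = 0) ∧
        x = ∑ i, c i • (fun k => ((a i k : ℝ))))
    (hsmooth : ∀ σ ∈ 𝒮,
      LinearIndependent ℤ (fun i : {i // i ∈ σ} => a i.1) ∧
        Submodule.span ℤ (a '' ↑σ) = ⊤)
    (hconv : Convex ℝ (⋃ σ ∈ 𝒮,
      convexHull ℝ (insert (0 : Fin n → ℝ) ((fun i => fun k => ((a i k : ℝ))) '' ↑σ))))
    (Sring ω : Submodule ℂ (AddMonoidAlgebra ℂ (Fin (n + 1) → ℤ)))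
    (hSring : Sring = Submodule.span ℂ
      {p | ∃ c : Option (Fin m) → ℕ,
        p = AddMonoidAlgebra.single (∑ o, (c o : ℤ) • atilde a o) (1 : ℂ)})
    (hω : ω = Submodule.span ℂ
      {p | ∃ x : Fin (n + 1) → ℤ,
        ((fun k => ((x k : ℝ))) ∈ interior
          {y : Fin (n + 1) → ℝ | ∃ c : Option (Fin m) → ℝ, (∀ o, 0 ≤ c o) ∧
            y = ∑ o, c o • (fun k => ((atilde a o k : ℝ)))}) ∧
        p = AddMonoidAlgebra.single x (1 : ℂ)}) :
    ω ≤ Sring ∧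
    (∀ p ∈ Sring, ∀ q ∈ ω, p * q ∈ ω) ∧
    (ω : Set (AddMonoidAlgebra ℂ (Fin (n + 1) → ℤ)))
      = (fun s => AddMonoidAlgebra.single (Fin.cons 1 0 : Fin (n + 1) → ℤ) (1 : ℂ) * s) ''
          (Sring : Set (AddMonoidAlgebra ℂ (Fin (n + 1) → ℤ))) :=
  stmt18_general n m a 𝒮 hray hcomplete hsmooth hconv Sring ω hSring hω
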